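/- Suppose a connected 3-regular geodesic net on the doubled regular n-gon has faces F₁, …, F_k, where face i has yᵢ ≥ 1 edges and encloses xᵢ ≥ 0 cone points, with Σxᵢ = n and for each i: (4π/n)xᵢ + (π/3)yᵢ = 2π. Then at least one face has xᵢ > 0, and for that face n(6 − yᵢ) = 12xᵢ with yᵢ ≤ 5, hence 3 ∣ n or 4 ∣ n. -/

import Mathlib

/-!
Clearing denominators, Gauss–Bonnet for a face reads `12 xᵢ + n yᵢ = 6 n`. Since the cone points
number `n > 0`, some face has `xᵢ > 0`, which forces `yᵢ < 6`. Then `12 ∣ n (6 - yᵢ)` with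
`1 ≤ 6 - yᵢ ≤ 5`, and each of these five values of `6 - yᵢ` leaves `3 ∣ n` or `4 ∣ n`.
-/

open Real

theorem gaussBonnet_iff_nat {n x y : ℕ} (hn : n ≠ 0) :
    (4 * π / n) * x + (π / 3) * y = 2 * π ↔ 12 * x + n * y = 6 * n := by
  have hn' : (n : ℝ) ≠ 0 := Nat.cast_ne_zero.mpr hn
  rw [← Nat.cast_inj (R := ℝ)]
  push_cast
  field_simp
  constructor <;> intro h <;> linarith

theorem le_five_of_gaussBonnet_nat {n x y : ℕ} (hx : 0 < x) (h : 12 * x + n * y = 6 * n) :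
    y ≤ 5 := by
  nlinarith

theorem three_dvd_or_four_dvd_of_mul_sub_eq {n x y : ℕ} (hy : 1 ≤ y) (hy5 : y ≤ 5)
    (h : n * (6 - y) = 12 * x) : 3 ∣ n ∨ 4 ∣ n := by
  interval_cases y <;> omega

/-- For a connected 3-regular geodesic net on the doubled regular `n`-gon with faces
`F₁, …, F_k`, where face `i` has `yᵢ ≥ 1` edges and encloses `xᵢ ≥ 0` cone points with
`Σ xᵢ = n` and Gauss–Bonnet `(4π/n)xᵢ + (π/3)yᵢ = 2π`: some face has `xᵢ > 0`, that
face satisfies `yᵢ ≤ 5` and `n(6 − yᵢ) = 12xᵢ`, and `3 ∣ n` or `4 ∣ n`. -/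
theorem three_regular_net_restriction
    (n k : ℕ) (hn : 0 < n) (x y : Fin k → ℕ)
    (hy : ∀ i, 1 ≤ y i)
    (hsum : ∑ i, x i = n)
    (hGB : ∀ i, (4 * π / n) * (x i) + (π / 3) * (y i) = 2 * π) :
    (∃ i, 0 < x i ∧ y i ≤ 5 ∧ n * (6 - y i) = 12 * x i) ∧ (3 ∣ n ∨ 4 ∣ n) := by
  obtain ⟨i, -, hxi⟩ := Finset.sum_pos_iff.mp (hsum ▸ hn)
  have hface := (gaussBonnet_iff_nat hn.ne').mp (hGB i)
  have hy5 := le_five_of_gaussBonnet_nat hxi hface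
  have heq : n * (6 - y i) = 12 * x i := by
    rw [Nat.mul_sub]
    omega
  exact ⟨⟨i, hxi, hy5, heq⟩, three_dvd_or_four_dvd_of_mul_sub_eq (hy i) hy5 heq⟩
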